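/- If \phi: F_2[x_1,...,x_n] \to F_2[x_1,...,x_m] is a ring homomorphism preserving neural ideals, then for each j\in[m] there exists a unique i\in[n] with \phi(x_i) \in \{x_j, 1-x_j\}, and for every i\in[n], \phi(x_i) \in \{0, 1\} \cup \{x_j, 1-x_j : j\in[m]\}. -/

import Mathlib

open MvPolynomial

/-- The pseudomonomial with positive part `σ` and negative part `τ`. -/
noncomputable def pm {n : ℕ} (σ τ : Finset (Fin n)) : MvPolynomial (Fin n) (ZMod 2) :=
  (∏ i ∈ σ, X i) * ∏ j ∈ τ, (1 - X j)

/-- A polynomial is a pseudomonomial if it is `pm σ τ` for disjoint `σ τ`. -/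
def IsPseudomonomial {n : ℕ} (f : MvPolynomial (Fin n) (ZMod 2)) : Prop :=
  ∃ σ τ : Finset (Fin n), Disjoint σ τ ∧ f = pm σ τ

/-- The indicator pseudomonomial `ρ_v` of a vector `v ∈ F₂ⁿ`. -/
noncomputable def indicatorPM {n : ℕ} (v : Fin n → ZMod 2) : MvPolynomial (Fin n) (ZMod 2) :=
  pm (Finset.univ.filter fun i => v i = 1) (Finset.univ.filter fun i => ¬ v i = 1)

/-- The neural ideal of a code `C ⊆ F₂ⁿ`. -/
noncomputable def neuralIdeal {n : ℕ} (C : Set (Fin n → ZMod 2)) :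
    Ideal (MvPolynomial (Fin n) (ZMod 2)) :=
  Ideal.span (indicatorPM '' {v | v ∉ C})

/-- A ring homomorphism preserves neural ideals if the image of every neural ideal
is a neural ideal. -/
def PreservesNeuralIdeals {n m : ℕ}
    (φ : MvPolynomial (Fin n) (ZMod 2) →+* MvPolynomial (Fin m) (ZMod 2)) : Prop :=
  ∀ C : Set (Fin n → ZMod 2), ∃ D : Set (Fin m → ZMod 2),
    φ '' (neuralIdeal C : Set (MvPolynomial (Fin n) (ZMod 2))) =
      (neuralIdeal D : Set (MvPolynomial (Fin m) (ZMod 2)))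

/-- The bit flip homomorphism `δ_i`. -/
noncomputable def bitFlip {n : ℕ} (i : Fin n) :
    MvPolynomial (Fin n) (ZMod 2) →ₐ[ZMod 2] MvPolynomial (Fin n) (ZMod 2) :=
  aeval (fun j => if j = i then 1 - X j else X j)

/-- The restriction map `ω_{m,m'} : F₂[x₁,…,xₙ] → F₂[x₁,…,x_m]`. -/
noncomputable def restrictionMap (n m m' : ℕ) :
    MvPolynomial (Fin n) (ZMod 2) →ₐ[ZMod 2] MvPolynomial (Fin m) (ZMod 2) :=
  aeval (fun i : Fin n => if h : (i : ℕ) < m then X (⟨i, h⟩ : Fin m)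
    else if (i : ℕ) < m' then 0 else 1)


/-!
Preserving neural ideals forces `φ` to be surjective, since the image of `J_∅ = ⟨1⟩` is an ideal
containing `1`. For a pseudomonomial `p`, the principal ideal `⟨p⟩` is the neural ideal of the
complement of the support of `p`, so `⟨φ p⟩ = φ ⟨p⟩` is a neural ideal: either `φ p = 0` or `φ p`
divides some `ρ_w`, and by unique factorization into the primes `x_k`, `1 - x_k` it is again a
pseudomonomial. Hence `φ (x_i)` and `1 - φ (x_i)` are each `0` or a pseudomonomial; two
pseudomonomials summing to `1` have complementary supports, and a subcube of `F₂ᵐ` whose complement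
is a subcube has codimension one, so `φ (x_i)` is `0`, `1` or a literal `x_j`, `1 - x_j`.
If two variables were sent to literals in `x_j`, then `x_i x_i'` or `x_i (1 - x_i')` would be sent
to `x_j (1 - x_j)`, which vanishes on `F₂ᵐ` and so is not a pseudomonomial. If none were, setting
`x_j = 0` would fix the image of `φ`, which contains `x_j`.
-/

section Divisors

variable {M ι : Type*} [CommMonoidWithZero M] [IsCancelMulZero M] [Subsingleton Mˣ]

theorem exists_subset_eq_prod_of_dvd_prod {p : ι → M} {s : Finset ι}
    (hp : ∀ i ∈ s, Prime (p i)) {f : M} (hf : f ∣ ∏ i ∈ s, p i) :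
    ∃ t ⊆ s, f = ∏ i ∈ t, p i := by
  classical
  induction s using Finset.induction_on generalizing f with
  | empty =>
    rw [Finset.prod_empty] at hf
    refine ⟨∅, subset_rfl, ?_⟩
    rw [Finset.prod_empty, ← isUnit_iff_eq_one]
    exact isUnit_of_dvd_one hf
  | insert a s ha ih =>
    rw [Finset.prod_insert ha] at hf
    have hpa : Prime (p a) := hp a (Finset.mem_insert_self a s)
    have hps : ∀ i ∈ s, Prime (p i) := fun i hi => hp i (Finset.mem_insert_of_mem hi)
    rcases hpa.left_dvd_or_dvd_right_of_dvd_mul hf with ⟨g, rfl⟩ | hfs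
    · obtain ⟨t, hts, rfl⟩ := ih hps ((mul_dvd_mul_iff_left hpa.ne_zero).1 hf)
      exact ⟨insert a t, Finset.insert_subset_insert a hts,
        (Finset.prod_insert fun hat => ha (hts hat)).symm⟩
    · obtain ⟨t, hts, rfl⟩ := ih hps hfs
      exact ⟨t, hts.trans (Finset.subset_insert a s), rfl⟩

end Divisors

instance MvPolynomial.subsingleton_units {σ R : Type*} [CommRing R] [IsReduced R]
    [Subsingleton Rˣ] : Subsingleton (MvPolynomial σ R)ˣ := by
  refine ⟨fun u v => Units.ext ?_⟩
  suffices h : ∀ w : (MvPolynomial σ R)ˣ, (w : MvPolynomial σ R) = 1 by rw [h u, h v]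
  intro w
  obtain ⟨r, hr, hw⟩ := isUnit_iff_eq_C_of_isReduced.1 w.isUnit
  rw [hw, isUnit_iff_eq_one.1 hr, C_1]

theorem bitFlip_comp_bitFlip {n : ℕ} (i : Fin n) :
    (bitFlip i).comp (bitFlip i) = AlgHom.id (ZMod 2) _ := by
  ext k
  by_cases hk : k = i <;> simp [bitFlip, hk]

theorem prime_one_sub_X {n : ℕ} (i : Fin n) :
    Prime (1 - X i : MvPolynomial (Fin n) (ZMod 2)) := by
  let e := AlgEquiv.ofAlgHom _ _ (bitFlip_comp_bitFlip i) (bitFlip_comp_bitFlip i)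
  have he : e (X i) = 1 - X i := by simp [e, bitFlip]
  rw [← he, MulEquiv.prime_iff]
  exact X_prime

section Pseudomonomial

variable {n : ℕ}

theorem pm_eq_prod_disjSum (σ τ : Finset (Fin n)) :
    pm σ τ = ∏ k ∈ σ.disjSum τ, Sum.elim X (fun j => 1 - X j) k := by
  simp [pm]

theorem pm_dvd_pm {σ τ σ' τ' : Finset (Fin n)} (hσ : σ ⊆ σ') (hτ : τ ⊆ τ') :
    pm σ τ ∣ pm σ' τ' :=
  mul_dvd_mul (Finset.prod_dvd_prod_of_subset _ _ _ hσ) (Finset.prod_dvd_prod_of_subset _ _ _ hτ)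

theorem isPseudomonomial_of_dvd_pm {σ τ : Finset (Fin n)} (hd : Disjoint σ τ)
    {f : MvPolynomial (Fin n) (ZMod 2)} (hf : f ∣ pm σ τ) : IsPseudomonomial f := by
  rw [pm_eq_prod_disjSum] at hf
  have hprime : ∀ k ∈ σ.disjSum τ,
      Prime (Sum.elim X (fun j => 1 - X j) k : MvPolynomial (Fin n) (ZMod 2)) := by
    rintro (_ | j) -
    exacts [X_prime, prime_one_sub_X j]
  obtain ⟨t, ht, rfl⟩ := exists_subset_eq_prod_of_dvd_prod hprime hf
  rw [Finset.subset_disjSum] at ht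
  refine ⟨t.toLeft, t.toRight, hd.mono ht.1 ht.2, ?_⟩
  rw [pm_eq_prod_disjSum, Finset.toLeft_disjSum_toRight]

def pmSupport (σ τ : Finset (Fin n)) : Set (Fin n → ZMod 2) :=
  {v | (∀ i ∈ σ, v i = 1) ∧ ∀ j ∈ τ, v j = 0}

theorem zmod_two_eq_zero_of_ne_one : ∀ a : ZMod 2, a ≠ 1 → a = 0 := by decide

theorem zmod_two_eq_one_of_ne_zero : ∀ a : ZMod 2, a ≠ 0 → a = 1 := by decide

theorem eval_pm_of_mem {σ τ : Finset (Fin n)} {v : Fin n → ZMod 2} (hv : v ∈ pmSupport σ τ) :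
    eval v (pm σ τ) = 1 := by
  simp only [pm, map_mul, map_prod, map_sub, map_one, eval_X]
  rw [Finset.prod_eq_one hv.1, Finset.prod_eq_one fun j hj => by rw [hv.2 j hj, sub_zero], one_mul]

theorem eval_pm_of_notMem {σ τ : Finset (Fin n)} {v : Fin n → ZMod 2} (hv : v ∉ pmSupport σ τ) :
    eval v (pm σ τ) = 0 := by
  simp only [pm, map_mul, map_prod, map_sub, map_one, eval_X]
  have hv' : ¬((∀ i ∈ σ, v i = 1) ∧ ∀ j ∈ τ, v j = 0) := hv
  simp only [not_and_or, not_forall] at hv'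
  rcases hv' with ⟨i, hi, hvi⟩ | ⟨j, hj, hvj⟩
  · rw [Finset.prod_eq_zero hi (zmod_two_eq_zero_of_ne_one _ hvi), zero_mul]
  · rw [Finset.prod_eq_zero hj (by rw [zmod_two_eq_one_of_ne_zero _ hvj, sub_self]), mul_zero]

theorem pmSupport_nonempty {σ τ : Finset (Fin n)} (hd : Disjoint σ τ) :
    (pmSupport σ τ).Nonempty :=
  ⟨fun k => if k ∈ σ then 1 else 0, fun _ hi => if_pos hi,
    fun _ hj => if_neg (Finset.disjoint_right.1 hd hj)⟩

theorem apply_eq_of_mem_pmSupport {σ τ : Finset (Fin n)} {v w : Fin n → ZMod 2}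
    (hv : v ∈ pmSupport σ τ) (hw : w ∈ pmSupport σ τ) {k : Fin n} (hk : k ∈ σ ∪ τ) :
    v k = w k := by
  rcases Finset.mem_union.1 hk with hk | hk
  exacts [(hv.1 k hk).trans (hw.1 k hk).symm, (hv.2 k hk).trans (hw.2 k hk).symm]

theorem mem_pmSupport_of_forall_eq_or_eq {σ τ : Finset (Fin n)} {u v w : Fin n → ZMod 2}
    (hv : v ∈ pmSupport σ τ) (hw : w ∈ pmSupport σ τ) (h : ∀ k, u k = v k ∨ u k = w k) :
    u ∈ pmSupport σ τ := by
  refine ⟨fun i hi => ?_, fun j hj => ?_⟩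
  · rcases h i with h | h <;> rw [h]
    exacts [hv.1 i hi, hw.1 i hi]
  · rcases h j with h | h <;> rw [h]
    exacts [hv.2 j hj, hw.2 j hj]

theorem not_isPseudomonomial_X_mul_one_sub_X (j : Fin n) :
    ¬IsPseudomonomial (X j * (1 - X j) : MvPolynomial (Fin n) (ZMod 2)) := by
  rintro ⟨σ, τ, hd, h⟩
  obtain ⟨v, hv⟩ := pmSupport_nonempty hd
  have heval := congrArg (eval v) h
  have hzero : ∀ a : ZMod 2, a * (1 - a) = 0 := by decide
  rw [map_mul, map_sub, map_one, eval_X, hzero, eval_pm_of_mem hv] at heval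
  exact zero_ne_one heval

end Pseudomonomial

section Literals

variable {n : ℕ}

theorem card_union_eq_one_of_compl_pmSupport {σ τ σ' τ' : Finset (Fin n)} (hd : Disjoint σ τ)
    (hd' : Disjoint σ' τ') (h : (pmSupport σ τ)ᶜ = pmSupport σ' τ') : (σ ∪ τ).card = 1 := by
  obtain ⟨v, hv⟩ := pmSupport_nonempty hd
  have hflip : ∀ k ∈ σ ∪ τ, Function.update v k (v k + 1) ∈ pmSupport σ' τ' := by
    intro k hk
    rw [← h]
    intro hmem
    simpa using apply_eq_of_mem_pmSupport hmem hv hk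
  have hpos : (σ ∪ τ).card ≠ 0 := by
    intro h0
    rw [Finset.card_eq_zero, Finset.union_eq_empty] at h0
    obtain ⟨w, hw⟩ := pmSupport_nonempty hd'
    rw [← h, h0.1, h0.2] at hw
    exact hw ⟨by simp, by simp⟩
  by_contra hne
  obtain ⟨a, ha, b, hb, hab⟩ := (Finset.one_lt_card (s := σ ∪ τ)).1 (by omega)
  -- `v` agrees with its flip at `a` off `a`, and with its flip at `b` at `a`.
  have hv' : v ∈ pmSupport σ' τ' := by
    refine mem_pmSupport_of_forall_eq_or_eq (hflip a ha) (hflip b hb) fun k => ?_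
    by_cases hka : k = a
    · rw [hka]
      exact Or.inr (Function.update_of_ne hab ..).symm
    · exact Or.inl (Function.update_of_ne hka ..).symm
  rw [← h] at hv'
  exact hv' hv

theorem exists_pm_eq_X_or_one_sub_X {σ τ : Finset (Fin n)} (hd : Disjoint σ τ)
    (h : (σ ∪ τ).card = 1) : ∃ j, pm σ τ = X j ∨ pm σ τ = 1 - X j := by
  obtain ⟨a, ha⟩ := Finset.card_eq_one.1 h
  have hσ : σ ⊆ {a} := ha ▸ Finset.subset_union_left
  have hτ : τ ⊆ {a} := ha ▸ Finset.subset_union_right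
  refine ⟨a, ?_⟩
  rcases Finset.subset_singleton_iff.1 hσ with rfl | rfl <;>
    rcases Finset.subset_singleton_iff.1 hτ with rfl | rfl
  · simp at ha
  · simp [pm]
  · simp [pm]
  · simp at hd

theorem exists_pm_eq_X_or_one_sub_X_of_add_eq_one {σ τ σ' τ' : Finset (Fin n)}
    (hd : Disjoint σ τ) (hd' : Disjoint σ' τ') (h : pm σ τ + pm σ' τ' = 1) :
    ∃ j, pm σ τ = X j ∨ pm σ τ = 1 - X j := by
  refine exists_pm_eq_X_or_one_sub_X hd (card_union_eq_one_of_compl_pmSupport hd hd' ?_)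
  ext v
  have hv := congrArg (eval v) h
  rw [map_add, map_one] at hv
  by_cases h1 : v ∈ pmSupport σ τ <;> by_cases h2 : v ∈ pmSupport σ' τ' <;>
    simp_all [eval_pm_of_mem, eval_pm_of_notMem]

end Literals

section NeuralIdeal

variable {n : ℕ}

theorem indicatorPM_eq_prod (v : Fin n → ZMod 2) :
    indicatorPM v = ∏ k, if v k = 1 then X k else 1 - X k := by
  rw [Finset.prod_ite]
  rfl

theorem pm_mem_neuralIdeal_compl_pmSupport {σ τ : Finset (Fin n)} (hd : Disjoint σ τ) :
    pm σ τ ∈ neuralIdeal (pmSupport σ τ)ᶜ := by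
  let t : Fin n → Finset (ZMod 2) := fun k => if k ∈ σ then {1} else if k ∈ τ then {0} else {0, 1}
  have hfactor : ∀ k, ∑ a ∈ t k, (if a = 1 then X k else 1 - X k : MvPolynomial (Fin n) (ZMod 2)) =
      (if k ∈ σ then X k else 1) * (if k ∈ τ then 1 - X k else 1) := by
    intro k
    by_cases hσ : k ∈ σ
    · simp [t, hσ, Finset.disjoint_left.1 hd hσ]
    · by_cases hτ : k ∈ τ <;> simp [t, hσ, hτ]
  -- Expanding `∏ₖ ∑_{a ∈ t k}` writes `pm σ τ` as the sum of the `ρ_v` over its support.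
  have hpm : pm σ τ = ∑ v ∈ Fintype.piFinset t, indicatorPM v := by
    simp_rw [indicatorPM_eq_prod]
    rw [← Finset.prod_univ_sum t fun k a => if a = 1 then X k else 1 - X k]
    simp_rw [hfactor, Finset.prod_mul_distrib, Finset.prod_ite_mem, Finset.univ_inter]
    rfl
  rw [hpm]
  refine Ideal.sum_mem _ fun v hv => Ideal.subset_span ⟨v, ?_, rfl⟩
  rw [Fintype.mem_piFinset] at hv
  refine not_not.2 ⟨fun i hi => ?_, fun j hj => ?_⟩
  · simpa [t, hi] using hv i
  · simpa [t, hj, Finset.disjoint_right.1 hd hj] using hv j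

theorem neuralIdeal_compl_pmSupport {σ τ : Finset (Fin n)} (hd : Disjoint σ τ) :
    neuralIdeal (pmSupport σ τ)ᶜ = Ideal.span {pm σ τ} := by
  refine le_antisymm (Ideal.span_le.2 ?_)
    (Ideal.span_le.2 (Set.singleton_subset_iff.2 (pm_mem_neuralIdeal_compl_pmSupport hd)))
  rintro _ ⟨v, hv, rfl⟩
  have hv : v ∈ pmSupport σ τ := not_not.1 hv
  refine Ideal.mem_span_singleton.2 (pm_dvd_pm (fun i hi => ?_) (fun j hj => ?_))
  · simp [hv.1 i hi]
  · simp [hv.2 j hj]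

theorem eq_zero_or_isPseudomonomial_of_span_eq_neuralIdeal {f : MvPolynomial (Fin n) (ZMod 2)}
    {D : Set (Fin n → ZMod 2)} (h : Ideal.span {f} = neuralIdeal D) :
    f = 0 ∨ IsPseudomonomial f := by
  by_cases hD : ∃ w, w ∉ D
  · obtain ⟨w, hw⟩ := hD
    have hdvd : f ∣ indicatorPM w := Ideal.mem_span_singleton.1 (h ▸ Ideal.subset_span ⟨w, hw, rfl⟩)
    exact Or.inr (isPseudomonomial_of_dvd_pm (Finset.disjoint_filter_filter_not _ _ _) hdvd)
  · simp only [not_exists, not_not] at hD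
    have hbot : neuralIdeal D = ⊥ := by simp [neuralIdeal, hD]
    rw [hbot, Ideal.span_singleton_eq_bot] at h
    exact Or.inl h

end NeuralIdeal

section Preserving

variable {n m : ℕ} {φ : MvPolynomial (Fin n) (ZMod 2) →+* MvPolynomial (Fin m) (ZMod 2)}

theorem PreservesNeuralIdeals.surjective (h : PreservesNeuralIdeals φ) : Function.Surjective φ := by
  obtain ⟨D, hD⟩ := h ∅
  have htop : neuralIdeal (∅ : Set (Fin n → ZMod 2)) = ⊤ := by
    have hsupp : (pmSupport (∅ : Finset (Fin n)) ∅)ᶜ = ∅ := by simp [pmSupport]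
    rw [← hsupp, neuralIdeal_compl_pmSupport (Finset.disjoint_empty_left _)]
    simp [pm]
  rw [htop, Submodule.top_coe, Set.image_univ] at hD
  have hDtop : neuralIdeal D = ⊤ := (Ideal.eq_top_iff_one _).2
    (show (1 : MvPolynomial (Fin m) (ZMod 2)) ∈ (neuralIdeal D : Set _) from hD ▸ ⟨1, map_one φ⟩)
  rw [hDtop, Submodule.top_coe] at hD
  exact Set.range_eq_univ.1 hD

theorem PreservesNeuralIdeals.map_pm {σ τ : Finset (Fin n)} (h : PreservesNeuralIdeals φ)
    (hd : Disjoint σ τ) : φ (pm σ τ) = 0 ∨ IsPseudomonomial (φ (pm σ τ)) := by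
  obtain ⟨D, hD⟩ := h (pmSupport σ τ)ᶜ
  refine eq_zero_or_isPseudomonomial_of_span_eq_neuralIdeal (D := D) (SetLike.coe_injective ?_)
  rw [← hD, neuralIdeal_compl_pmSupport hd, ← Set.image_singleton, ← Ideal.map_span]
  ext f
  exact Ideal.mem_map_iff_of_surjective φ h.surjective

theorem PreservesNeuralIdeals.map_X (h : PreservesNeuralIdeals φ) (i : Fin n) :
    φ (X i) = 0 ∨ φ (X i) = 1 ∨ ∃ j, φ (X i) = X j ∨ φ (X i) = 1 - X j := by
  have hX := h.map_pm (σ := {i}) (τ := ∅) (Finset.disjoint_empty_right _)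
  have hY := h.map_pm (σ := ∅) (τ := {i}) (Finset.disjoint_empty_left _)
  simp only [pm, Finset.prod_singleton, Finset.prod_empty, mul_one, one_mul, map_sub, map_one]
    at hX hY
  rcases hX with hX | ⟨σ, τ, hd, hX⟩
  · exact Or.inl hX
  rcases hY with hY | ⟨σ', τ', hd', hY⟩
  · exact Or.inr (Or.inl (sub_eq_zero.1 hY).symm)
  rw [hX] at hY ⊢
  exact Or.inr (Or.inr (exists_pm_eq_X_or_one_sub_X_of_add_eq_one hd hd' (by rw [← hY]; ring)))

theorem PreservesNeuralIdeals.map_pm_ne_X_mul_one_sub_X {σ τ : Finset (Fin n)}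
    (h : PreservesNeuralIdeals φ) (hd : Disjoint σ τ) (j : Fin m) :
    φ (pm σ τ) ≠ X j * (1 - X j) := by
  intro heq
  rcases h.map_pm hd with h0 | hpm
  · exact mul_ne_zero (X_ne_zero j) (prime_one_sub_X j).ne_zero (heq ▸ h0)
  · exact not_isPseudomonomial_X_mul_one_sub_X j (heq ▸ hpm)

theorem PreservesNeuralIdeals.eq_of_map_X_eq_literal (h : PreservesNeuralIdeals φ)
    {i i' : Fin n} {j : Fin m} (hi : φ (X i) = X j ∨ φ (X i) = 1 - X j)
    (hi' : φ (X i') = X j ∨ φ (X i') = 1 - X j) : i = i' := by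
  by_contra hne
  have hpair : φ (pm {i} {i'}) = X j * (1 - X j) ∨ φ (pm {i, i'} ∅) = X j * (1 - X j) := by
    simp only [pm, Finset.prod_singleton, Finset.prod_pair hne, Finset.prod_empty, mul_one,
      map_mul, map_sub, map_one]
    rcases hi with hi | hi <;> rcases hi' with hi' | hi' <;> rw [hi, hi']
    · exact Or.inl rfl
    · exact Or.inr rfl
    · exact Or.inr (mul_comm _ _)
    · exact Or.inl (by ring)
  rcases hpair with hpair | hpair
  · exact h.map_pm_ne_X_mul_one_sub_X (Finset.disjoint_singleton.2 hne) j hpair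
  · exact h.map_pm_ne_X_mul_one_sub_X (Finset.disjoint_empty_right _) j hpair

theorem PreservesNeuralIdeals.exists_map_X_eq_literal (h : PreservesNeuralIdeals φ) (j : Fin m) :
    ∃ i, φ (X i) = X j ∨ φ (X i) = 1 - X j := by
  by_contra hno
  simp only [not_exists, not_or] at hno
  let s : MvPolynomial (Fin m) (ZMod 2) →+* MvPolynomial (Fin m) (ZMod 2) :=
    (aeval (Function.update X j 0) :
      MvPolynomial (Fin m) (ZMod 2) →ₐ[ZMod 2] MvPolynomial (Fin m) (ZMod 2)).toRingHom
  have hfix : s.comp φ = φ := by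
    refine ringHom_ext' (RingHom.ext_zmod _ _) fun i => ?_
    rcases h.map_X i with h0 | h1 | ⟨k, hk | hk⟩
    · simp [h0]
    · simp [h1]
    · have hkj : k ≠ j := fun hkj => (hno i).1 (hkj ▸ hk)
      simp [s, hk, hkj]
    · have hkj : k ≠ j := fun hkj => (hno i).2 (hkj ▸ hk)
      simp [s, hk, hkj]
  obtain ⟨g, hg⟩ := h.surjective (X j)
  have hXj : s (X j) = X j := hg ▸ RingHom.congr_fun hfix g
  have hsXj : s (X j) = 0 := by simp [s]
  exact X_ne_zero j (hsXj ▸ hXj).symm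

end Preserving

theorem variables_under_preserving {n m : ℕ}
    (φ : MvPolynomial (Fin n) (ZMod 2) →+* MvPolynomial (Fin m) (ZMod 2))
    (h : PreservesNeuralIdeals φ) :
    (∀ j : Fin m, ∃! i : Fin n, φ (X i) = X j ∨ φ (X i) = 1 - X j) ∧
      ∀ i : Fin n, φ (X i) = 0 ∨ φ (X i) = 1 ∨
        ∃ j : Fin m, φ (X i) = X j ∨ φ (X i) = 1 - X j := by
  refine ⟨fun j => ?_, h.map_X⟩
  obtain ⟨i, hi⟩ := h.exists_map_X_eq_literal j
  exact ⟨i, hi, fun i' hi' => h.eq_of_map_X_eq_literal hi' hi⟩
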